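/- arXiv:1109.1571 — 2 statements merged into one kernel-verified Lean document; each statement's English description precedes it below -/
import Mathlib

section
/- Simplicial Alexander duality: for an abstract simplicial complex Δ on a finite vertex set V with |V| = n, and for every integer i, the i-th reduced simplicial homology of the Alexander dual Δ* (with coefficients in a field k) is isomorphic to the (n − 3 − i)-th reduced simplicial cohomology of Δ with coefficients in k. -/
open Finset

/-- An abstract simplicial complex on the vertex set `V`: a collection of subsets
of `V` closed under taking subsets. -/
def IsSimplicialComplex {V : Type*} (Δ : Finset (Finset V)) : Prop :=
  ∀ σ ∈ Δ, ∀ τ ⊆ σ, τ ∈ Δ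

/-- The Alexander dual `Δ* = {σ ⊆ V : V \ σ ∉ Δ}`. -/
def alexDual {V : Type*} [Fintype V] [DecidableEq V] (Δ : Finset (Finset V)) :
    Finset (Finset V) :=
  Finset.univ.filter fun σ => σᶜ ∉ Δ

/-- The link of `σ` in `Δ`: `link_Δ(σ) = {τ ∈ Δ : τ ∪ σ ∈ Δ, τ ∩ σ = ∅}`. -/
def linkOf {V : Type*} [DecidableEq V] (Δ : Finset (Finset V)) (σ : Finset V) :
    Finset (Finset V) :=
  Δ.filter fun τ => τ ∪ σ ∈ Δ ∧ τ ∩ σ = ∅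

/-- The restriction `Δ|_σ = {τ ∈ Δ : τ ⊆ σ}`. -/
def restrict {V : Type*} [DecidableEq V] (Δ : Finset (Finset V)) (σ : Finset V) :
    Finset (Finset V) :=
  Δ.filter fun τ => τ ⊆ σ

/-- The simplicial boundary matrix of a graded family `F` of finite sets of faces:
the matrix of the map `F j → F (j-1)`, `e_τ ↦ ∑_{i ∈ τ} sign(i,τ) e_{τ \ {i}}`,
where `sign(i,τ) = (-1)^(s-1)` if `i` is the `s`-th smallest element of `τ`. -/
noncomputable def bMat (k : Type*) [Field k] {V : Type*} [LinearOrder V] [Fintype V]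
    (F : ℤ → Finset (Finset V)) (j : ℤ) : Matrix (F (j - 1)) (F j) k :=
  Matrix.of fun τ' τ =>
    ∑ i ∈ τ.1, if τ.1.erase i = τ'.1
      then (-1 : k) ^ (τ.1.filter fun a => a < i).card else 0

/-- Dimension of the `j`-th homology of the chain complex with chain spaces spanned
by `F j` and the boundary maps `bMat`: `dim ker ∂_j − dim im ∂_(j+1)`. -/
noncomputable def homDimAt (k : Type*) [Field k] {V : Type*} [LinearOrder V] [Fintype V]
    (F : ℤ → Finset (Finset V)) (j : ℤ) : ℕ :=
  ((F j).card - (bMat k F j).rank) - (bMat k F (j + 1)).rank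

/-- Dimension of the `j`-th cohomology of the dual (transposed) complex:
`dim ker δ^j − dim im δ^(j-1)` where `δ^j = (∂_(j+1))ᵀ`. -/
noncomputable def cohomDimAt (k : Type*) [Field k] {V : Type*} [LinearOrder V] [Fintype V]
    (F : ℤ → Finset (Finset V)) (j : ℤ) : ℕ :=
  ((F j).card - (bMat k F (j + 1)).transpose.rank) - (bMat k F j).transpose.rank

/-- The `j`-dimensional faces of a simplicial complex `Δ` (faces with `j+1` vertices);
the empty face sits in dimension `-1`, yielding *reduced* (co)homology below. -/
def cplxFaces {V : Type*} [LinearOrder V] [Fintype V] (Δ : Finset (Finset V)) (j : ℤ) :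
    Finset (Finset V) :=
  Δ.filter fun τ => (τ.card : ℤ) = j + 1

/-- `dim_k H̃_j(Δ; k)`, reduced simplicial homology with coefficients in `k`. -/
noncomputable def redHomDim (k : Type*) [Field k] {V : Type*} [LinearOrder V] [Fintype V]
    (Δ : Finset (Finset V)) (j : ℤ) : ℕ :=
  homDimAt k (cplxFaces Δ) j

/-- `dim_k H̃^j(Δ; k)`, reduced simplicial cohomology with coefficients in `k`. -/
noncomputable def redCohomDim (k : Type*) [Field k] {V : Type*} [LinearOrder V] [Fintype V]
    (Δ : Finset (Finset V)) (j : ℤ) : ℕ :=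
  cohomDimAt k (cplxFaces Δ) j

/-!
Complementation `σ ↦ V \ σ` is a bijection from the `i`-dimensional faces of `Δ*` onto the
non-faces of `Δ` with `n - i - 1` vertices, and up to the diagonal signs `rankSign` it turns
the boundary matrices of `Δ*` into the transposed boundary matrices of the relative chain
complex `C(2^V) / C(Δ)`, which has the non-faces as basis. Hence
`H̃_i(Δ*) ≅ H^{n-i-2}(2^V, Δ)`. For `V ≠ ∅` the full simplex `2^V` (empty face included) is a
cone over its least vertex, hence acyclic, and the long exact sequence of the pair `(2^V, Δ)`
gives `H^{n-i-2}(2^V, Δ) ≅ H̃^{n-i-3}(Δ)`. Over a field each of these steps is an identity between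
ranks of boundary matrices.
-/

open Matrix Function

theorem Finset.sum_coe_sort_ite_eq {α M : Type*} [AddCommMonoid M] [DecidableEq α]
    {t : Finset α} {a : α} (ha : a ∈ t) (f : α → M) :
    ∑ σ : t, (if a = σ.1 then f σ.1 else 0) = f a := by
  rw [sum_coe_sort t fun σ => if a = σ then f σ else 0, sum_ite_eq, if_pos ha]

theorem Matrix.mulVec_extend_eq_extend_submatrix_mulVec {m m' n n' R : Type*} [Fintype n]
    [Fintype n'] [NonUnitalNonAssocSemiring R] (M : Matrix m' n' R) {e : m → m'} {f : n → n'}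
    (he : Injective e) (hf : Injective f) (hM : ∀ i ∉ Set.range e, ∀ j, M i (f j) = 0)
    (x : n → R) : M *ᵥ extend f x 0 = extend e (M.submatrix e f *ᵥ x) 0 := by
  funext i
  have hsum : (M *ᵥ extend f x 0) i = ∑ j, M i (f j) * x j :=
    (Fintype.sum_of_injective f hf (fun j => M i (f j) * x j)
      (fun j => M i j * extend f x 0 j) (fun j hj => by rw [extend_apply' _ _ _ hj, Pi.zero_apply,
      mul_zero]) fun j => by rw [hf.extend_apply]).symm
  by_cases hi : i ∈ Set.range e
  · obtain ⟨a, rfl⟩ := hi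
    rw [hsum, he.extend_apply]
    rfl
  · rw [hsum, extend_apply' _ _ _ hi, Pi.zero_apply]
    exact Finset.sum_eq_zero fun j _ => by rw [hM i hi j, zero_mul]

theorem Matrix.mulVec_comp_eq_submatrix_mulVec_comp {m m' n n' R : Type*} [Fintype n]
    [Fintype n'] [NonUnitalNonAssocSemiring R] (M : Matrix m' n' R) (e : m → m') {f : n → n'}
    (hf : Injective f) (hM : ∀ i, ∀ j ∉ Set.range f, M (e i) j = 0) (y : n' → R) :
    (M *ᵥ y) ∘ e = M.submatrix e f *ᵥ (y ∘ f) := by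
  funext i
  exact (Fintype.sum_of_injective f hf (fun j => M (e i) (f j) * y (f j))
    (fun j => M (e i) j * y j) (fun j hj => by rw [hM i j hj, zero_mul]) fun _ => rfl).symm

theorem LinearMap.ker_funLeft_eq_range_extendByZero {R m n p : Type*} [Semiring R] {e : m → n}
    {f : p → n} (he : Injective e) (hef : IsCompl (Set.range e) (Set.range f)) :
    LinearMap.ker (LinearMap.funLeft R R f) = LinearMap.range (ExtendByZero.linearMap R e) := by
  ext y
  simp only [LinearMap.mem_ker, LinearMap.mem_range]
  constructor
  · refine fun hy => ⟨y ∘ e, funext fun j => ?_⟩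
    rw [ExtendByZero.linearMap_apply]
    by_cases hj : j ∈ Set.range e
    · obtain ⟨a, rfl⟩ := hj
      exact he.extend_apply _ _ a
    · obtain ⟨a, rfl⟩ : j ∈ Set.range f := hef.compl_eq ▸ hj
      rw [extend_apply' _ _ _ hj]
      exact (congrFun hy a).symm
  · rintro ⟨x, rfl⟩
    exact funext fun a => extend_apply' _ _ _
      (Set.disjoint_right.1 hef.disjoint (Set.mem_range_self a))

theorem LinearMap.ker_inf_range_eq_map_ker {R M M' N N' : Type*} [Semiring R] [AddCommMonoid M]
    [AddCommMonoid M'] [AddCommMonoid N] [AddCommMonoid N'] [Module R M] [Module R M']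
    [Module R N] [Module R N'] {ι : M →ₗ[R] N} {ι' : M' →ₗ[R] N'} {D : N →ₗ[R] N'}
    {A : M →ₗ[R] M'} (hcomm : D ∘ₗ ι = ι' ∘ₗ A) (hι' : Injective ι') :
    LinearMap.ker D ⊓ LinearMap.range ι = (LinearMap.ker A).map ι := by
  ext y
  simp only [Submodule.mem_inf, LinearMap.mem_ker, LinearMap.mem_range, Submodule.mem_map]
  constructor
  · rintro ⟨hy, x, rfl⟩
    refine ⟨x, hι' ?_, rfl⟩
    rw [← LinearMap.comp_apply, ← hcomm, LinearMap.comp_apply, hy, map_zero]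
  · rintro ⟨x, hx, rfl⟩
    rw [← LinearMap.comp_apply, hcomm, LinearMap.comp_apply, hx, map_zero]
    exact ⟨rfl, x, rfl⟩

theorem Submodule.finrank_eq_finrank_map_add_finrank_inf_ker {K N P : Type*} [DivisionRing K]
    [AddCommGroup N] [AddCommGroup P] [Module K N] [Module K P] [FiniteDimensional K N]
    (R : Submodule K N) (p : N →ₗ[K] P) :
    Module.finrank K R = Module.finrank K (R.map p) + Module.finrank K ↥(R ⊓ LinearMap.ker p) := by
  rw [← LinearMap.finrank_range_add_finrank_ker (p ∘ₗ R.subtype), LinearMap.range_comp,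
    Submodule.range_subtype, LinearMap.ker_comp]
  congr 1
  rw [← (Submodule.comapSubtypeEquivOfLe (inf_le_left : R ⊓ LinearMap.ker p ≤ R)).finrank_eq,
    Submodule.comap_inf, Submodule.comap_subtype_self, top_inf_eq]

namespace AlexanderDuality

variable (k : Type*) [Field k] {V : Type*} [LinearOrder V]

noncomputable def faceSign (τ : Finset V) (i : V) : k :=
  (-1 : k) ^ (τ.filter fun a => a < i).card

noncomputable def boundaryCoeff (τ' τ : Finset V) : k :=
  ∑ i ∈ τ, if τ.erase i = τ' then faceSign k τ i else 0

variable {k}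

theorem faceSign_mul_self (τ : Finset V) (i : V) : faceSign k τ i * faceSign k τ i = 1 := by
  rw [faceSign, ← mul_pow, neg_one_mul, neg_neg, one_pow]

theorem faceSign_of_isBot (τ : Finset V) {v : V} (hv : IsBot v) : faceSign k τ v = 1 := by
  rw [faceSign, filter_false_of_mem fun a _ => (hv a).not_gt, card_empty, pow_zero]

theorem faceSign_erase_of_lt (τ : Finset V) {i x : V} (h : x < i) :
    faceSign k (τ.erase i) x = faceSign k τ x := by
  rw [faceSign, faceSign, filter_erase, erase_eq_of_notMem fun hi => (mem_filter.1 hi).2.not_gt h]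

theorem faceSign_erase_of_mem_of_lt {τ : Finset V} {i x : V} (hx : x ∈ τ) (h : x < i) :
    faceSign k (τ.erase x) i = -faceSign k τ i := by
  rw [faceSign, faceSign, filter_erase,
    ← card_erase_add_one (mem_filter.2 ⟨hx, h⟩ : x ∈ τ.filter fun a => a < i), pow_succ]
  ring

theorem faceSign_insert_of_lt {τ : Finset V} {i v : V} (hv : v ∉ τ) (h : v < i) :
    faceSign k (insert v τ) i = -faceSign k τ i := by
  conv_rhs => rw [← erase_insert hv, faceSign_erase_of_mem_of_lt (mem_insert_self v τ) h, neg_neg]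

theorem faceSign_insert_self (τ : Finset V) (i : V) :
    faceSign k (insert i τ) i = faceSign k τ i := by
  rw [faceSign, faceSign, filter_insert, if_neg (lt_irrefl i)]

theorem boundaryCoeff_erase {τ : Finset V} {i : V} (hi : i ∈ τ) :
    boundaryCoeff k (τ.erase i) τ = faceSign k τ i := by
  refine (sum_eq_single_of_mem i hi fun j _ hji => if_neg fun h => ?_).trans (if_pos rfl)
  exact notMem_erase i τ (h ▸ mem_erase.2 ⟨Ne.symm hji, hi⟩)

theorem boundaryCoeff_eq_zero {τ' τ : Finset V} (h : ∀ i ∈ τ, τ.erase i ≠ τ') :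
    boundaryCoeff k τ' τ = 0 :=
  sum_eq_zero fun i hi => if_neg (h i hi)

theorem boundaryCoeff_eq_zero_of_mem_of_notMem {Δ : Finset (Finset V)}
    (hΔ : IsSimplicialComplex Δ) {τ' τ : Finset V} (hτ : τ ∈ Δ) (hτ' : τ' ∉ Δ) :
    boundaryCoeff k τ' τ = 0 :=
  boundaryCoeff_eq_zero fun i _ h => hτ' (h ▸ hΔ τ hτ _ (erase_subset i τ))

theorem ite_erase_erase_mul_faceSign_add_swap (τ'' : Finset V) {τ : Finset V} {i x : V}
    (hx : x ∈ τ) (h : x < i) :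
    (if (τ.erase i).erase x = τ'' then faceSign k (τ.erase i) x else 0) * faceSign k τ i
      + (if (τ.erase x).erase i = τ'' then faceSign k (τ.erase x) i else 0) * faceSign k τ x
      = 0 := by
  rw [erase_right_comm, faceSign_erase_of_lt τ h, faceSign_erase_of_mem_of_lt hx h]
  split_ifs <;> ring

theorem sum_boundaryCoeff_erase_mul_faceSign (τ'' τ : Finset V) :
    ∑ i ∈ τ, boundaryCoeff k τ'' (τ.erase i) * faceSign k τ i = 0 := by
  simp_rw [boundaryCoeff, sum_mul]
  rw [sum_sigma']
  refine sum_involution (fun p _ => ⟨p.2, p.1⟩) ?_ ?_ ?_ fun _ _ => rfl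
  · rintro ⟨i, x⟩ hp
    obtain ⟨hi, hx⟩ := mem_sigma.1 hp
    rcases lt_or_gt_of_ne (ne_of_mem_erase hx) with h | h
    · exact ite_erase_erase_mul_faceSign_add_swap τ'' (mem_of_mem_erase hx) h
    · exact (add_comm _ _).trans (ite_erase_erase_mul_faceSign_add_swap τ'' hi h)
  · rintro ⟨i, x⟩ hp _ h
    exact (ne_of_mem_erase (mem_sigma.1 hp).2) (congrArg Sigma.fst h)
  · rintro ⟨i, x⟩ hp
    obtain ⟨hi, hx⟩ := mem_sigma.1 hp
    exact mem_sigma.2 ⟨mem_of_mem_erase hx, mem_erase.2 ⟨(ne_of_mem_erase hx).symm, hi⟩⟩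

theorem boundaryCoeff_erase_of_mem_of_mem {τ' τ : Finset V} {v : V} (hv : IsBot v)
    (hvτ : v ∈ τ) (hvτ' : v ∈ τ') :
    boundaryCoeff k (τ'.erase v) τ = if τ' = τ then 1 else 0 := by
  split_ifs with h
  · rw [h, boundaryCoeff_erase hvτ, faceSign_of_isBot τ hv]
  · refine boundaryCoeff_eq_zero fun i hi he => ?_
    by_cases hiv : i = v
    · exact h (by rw [← insert_erase hvτ', ← he, hiv, insert_erase hvτ])
    · exact notMem_erase v τ' (he ▸ mem_erase.2 ⟨Ne.symm hiv, hvτ⟩)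

theorem boundaryCoeff_insert_of_notMem_of_notMem {τ' τ : Finset V} {v : V} (hv : IsBot v)
    (hvτ : v ∉ τ) (hvτ' : v ∉ τ') : boundaryCoeff k τ' (insert v τ) = if τ' = τ then 1 else 0 := by
  rw [boundaryCoeff, sum_insert hvτ, erase_insert hvτ, faceSign_of_isBot _ hv,
    sum_eq_zero fun i hi => if_neg fun (h : _ = τ') => hvτ' (h ▸ mem_erase.2
      ⟨(ne_of_mem_of_not_mem hi hvτ).symm, mem_insert_self v τ⟩), add_zero]
  exact if_congr eq_comm rfl rfl

theorem boundaryCoeff_insert_of_notMem_of_mem {τ' τ : Finset V} {v : V} (hv : IsBot v)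
    (hvτ : v ∉ τ) (hvτ' : v ∈ τ') :
    boundaryCoeff k τ' (insert v τ) = -boundaryCoeff k (τ'.erase v) τ := by
  rw [boundaryCoeff, sum_insert hvτ, erase_insert hvτ,
    if_neg (ne_of_mem_of_not_mem' hvτ' hvτ).symm, zero_add, boundaryCoeff, ← sum_neg_distrib]
  refine sum_congr rfl fun i hi => ?_
  have hvi : v ≠ i := (ne_of_mem_of_not_mem hi hvτ).symm
  have hiff : (insert v τ).erase i = τ' ↔ τ.erase i = τ'.erase v := by
    rw [erase_insert_of_ne hvi, eq_comm, eq_comm (a := τ.erase i),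
      erase_eq_iff_eq_insert hvτ' fun h => hvτ (mem_of_mem_erase h)]
  rw [if_congr hiff rfl rfl, faceSign_insert_of_lt hvτ (lt_of_le_of_ne (hv i) hvi)]
  split_ifs <;> simp

theorem boundaryCoeff_insert_add_boundaryCoeff_erase {v : V} (hv : IsBot v) (τ' τ : Finset V) :
    ((if v ∉ τ then boundaryCoeff k τ' (insert v τ) else 0)
      + if v ∈ τ' then boundaryCoeff k (τ'.erase v) τ else 0) = if τ' = τ then 1 else 0 := by
  by_cases hvτ : v ∈ τ <;> by_cases hvτ' : v ∈ τ'
  · rw [if_neg (not_not.2 hvτ), if_pos hvτ', zero_add,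
      boundaryCoeff_erase_of_mem_of_mem hv hvτ hvτ']
  · rw [if_neg (not_not.2 hvτ), if_neg hvτ', if_neg (ne_of_mem_of_not_mem' hvτ hvτ').symm,
      add_zero]
  · rw [if_pos hvτ, if_pos hvτ', boundaryCoeff_insert_of_notMem_of_mem hv hvτ hvτ',
      if_neg (ne_of_mem_of_not_mem' hvτ' hvτ), neg_add_cancel]
  · rw [if_pos hvτ, if_neg hvτ', add_zero, boundaryCoeff_insert_of_notMem_of_notMem hv hvτ hvτ']

variable (k) in
noncomputable def boundaryMatrix (s t : Finset (Finset V)) : Matrix s t k :=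
  Matrix.of fun τ' τ => boundaryCoeff k τ'.1 τ.1

theorem mul_boundaryCoeff (c : k) (τ' τ : Finset V) :
    c * boundaryCoeff k τ' τ = ∑ i ∈ τ, if τ.erase i = τ' then c * faceSign k τ i else 0 := by
  simp_rw [boundaryCoeff, mul_sum, mul_ite, mul_zero]

theorem boundaryMatrix_mul_boundaryMatrix {s t u : Finset (Finset V)}
    (h : ∀ τ ∈ u, ∀ i ∈ τ, τ.erase i ∈ t) : boundaryMatrix k s t * boundaryMatrix k t u = 0 := by
  ext τ'' τ
  calc ∑ σ : t, boundaryCoeff k τ''.1 σ.1 * boundaryCoeff k σ.1 τ.1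
      = ∑ i ∈ τ.1, ∑ σ : t, if τ.1.erase i = σ.1
          then boundaryCoeff k τ''.1 σ.1 * faceSign k τ.1 i else 0 := by
        simp_rw [mul_boundaryCoeff]
        exact sum_comm
    _ = ∑ i ∈ τ.1, boundaryCoeff k τ''.1 (τ.1.erase i) * faceSign k τ.1 i :=
        sum_congr rfl fun i hi => sum_coe_sort_ite_eq (h τ.1 τ.2 i hi)
          fun σ => boundaryCoeff k τ''.1 σ * faceSign k τ.1 i
    _ = 0 := sum_boundaryCoeff_erase_mul_faceSign τ''.1 τ.1

variable (k) in
noncomputable def coneMatrix (v : V) (s t : Finset (Finset V)) : Matrix s t k :=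
  Matrix.of fun σ τ => if v ∉ τ.1 ∧ σ.1 = insert v τ.1 then 1 else 0

theorem boundaryMatrix_mul_coneMatrix_apply {s t u : Finset (Finset V)} {v : V}
    (h : ∀ τ ∈ u, v ∉ τ → insert v τ ∈ t) (τ' : s) (τ : u) :
    (boundaryMatrix k s t * coneMatrix k v t u) τ' τ
      = if v ∉ τ.1 then boundaryCoeff k τ'.1 (insert v τ.1) else 0 := by
  change ∑ σ : t, boundaryCoeff k τ'.1 σ.1 * (if v ∉ τ.1 ∧ σ.1 = insert v τ.1 then 1 else 0) = _
  by_cases hv : v ∈ τ.1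
  · simp [hv]
  · have hiff : ∀ σ : Finset V, (v ∉ τ.1 ∧ σ = insert v τ.1) ↔ insert v τ.1 = σ := fun σ =>
      ⟨fun h => h.2.symm, fun h => ⟨hv, h.symm⟩⟩
    simp_rw [hiff, mul_ite, mul_one, mul_zero, if_pos hv]
    exact sum_coe_sort_ite_eq (h τ.1 τ.2 hv) fun σ => boundaryCoeff k τ'.1 σ

theorem coneMatrix_mul_boundaryMatrix_apply {s t u : Finset (Finset V)} {v : V}
    (h : ∀ τ ∈ s, v ∈ τ → τ.erase v ∈ t) (τ' : s) (τ : u) :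
    (coneMatrix k v s t * boundaryMatrix k t u) τ' τ
      = if v ∈ τ'.1 then boundaryCoeff k (τ'.1.erase v) τ.1 else 0 := by
  change ∑ σ : t, (if v ∉ σ.1 ∧ τ'.1 = insert v σ.1 then 1 else 0) * boundaryCoeff k σ.1 τ.1 = _
  split_ifs with hv
  · have hiff : ∀ σ : Finset V, (v ∉ σ ∧ τ'.1 = insert v σ) ↔ τ'.1.erase v = σ := fun σ =>
      ⟨fun ⟨hvσ, he⟩ => by rw [he, erase_insert hvσ], fun he => ⟨he ▸ notMem_erase v _,
        by rw [← he, insert_erase hv]⟩⟩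
    simp_rw [hiff, ite_mul, one_mul, zero_mul]
    exact sum_coe_sort_ite_eq (h τ'.1 τ'.2 hv) fun σ => boundaryCoeff k σ τ.1
  · refine sum_eq_zero fun σ _ => ?_
    rw [if_neg fun (h : v ∉ σ.1 ∧ τ'.1 = insert v σ.1) => hv (h.2 ▸ mem_insert_self v σ.1),
      zero_mul]

variable [Fintype V]

theorem bMat_eq_boundaryMatrix (F : ℤ → Finset (Finset V)) (j : ℤ) :
    bMat k F j = boundaryMatrix k (F (j - 1)) (F j) :=
  rfl

variable (V) in
abbrev simplex : Finset (Finset V) := univ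

theorem mem_cplxFaces {Δ : Finset (Finset V)} {j : ℤ} {τ : Finset V} :
    τ ∈ cplxFaces Δ j ↔ τ ∈ Δ ∧ (τ.card : ℤ) = j + 1 :=
  mem_filter

theorem erase_mem_cplxFaces {Δ : Finset (Finset V)} (hΔ : IsSimplicialComplex Δ) {a b : ℤ}
    (hab : a + 1 = b) {τ : Finset V} (hτ : τ ∈ cplxFaces Δ b) {i : V} (hi : i ∈ τ) :
    τ.erase i ∈ cplxFaces Δ a := by
  obtain ⟨hτΔ, hcard⟩ := mem_cplxFaces.1 hτ
  refine mem_cplxFaces.2 ⟨hΔ τ hτΔ _ (erase_subset i τ), ?_⟩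
  have := card_erase_add_one hi
  omega

theorem insert_mem_cplxFaces_simplex {a b : ℤ} (hab : a + 1 = b) {τ : Finset V}
    (hτ : τ ∈ cplxFaces (simplex V) a) {v : V} (hv : v ∉ τ) :
    insert v τ ∈ cplxFaces (simplex V) b := by
  refine mem_cplxFaces.2 ⟨mem_univ _, ?_⟩
  rw [card_insert_of_notMem hv]
  have := (mem_cplxFaces.1 hτ).2
  omega

theorem card_cplxFaces_simplex (Δ : Finset (Finset V)) (j : ℤ) :
    (cplxFaces (simplex V) j).card = (cplxFaces Δ j).card + (cplxFaces Δᶜ j).card := by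
  rw [cplxFaces, cplxFaces, cplxFaces, simplex, ← union_compl Δ, filter_union,
    card_union_of_disjoint (disjoint_filter_filter disjoint_compl_right)]

theorem boundaryMatrix_mul_coneMatrix_add {v : V} (hv : IsBot v) (a : ℤ) :
    boundaryMatrix k (cplxFaces (simplex V) a) (cplxFaces (simplex V) (a + 1))
        * coneMatrix k v (cplxFaces (simplex V) (a + 1)) (cplxFaces (simplex V) a)
      + coneMatrix k v (cplxFaces (simplex V) a) (cplxFaces (simplex V) (a - 1))
        * boundaryMatrix k (cplxFaces (simplex V) (a - 1)) (cplxFaces (simplex V) a) = 1 := by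
  ext τ' τ
  rw [Matrix.add_apply,
    boundaryMatrix_mul_coneMatrix_apply fun _ hτ hvτ => insert_mem_cplxFaces_simplex rfl hτ hvτ,
    coneMatrix_mul_boundaryMatrix_apply fun _ hτ hvτ =>
      erase_mem_cplxFaces (fun _ _ _ _ => mem_univ _) (sub_add_cancel a 1) hτ hvτ,
    boundaryCoeff_insert_add_boundaryCoeff_erase hv, Matrix.one_apply]
  exact if_congr Subtype.ext_iff.symm rfl rfl

theorem ker_boundaryMatrix_simplex {v : V} (hv : IsBot v) (t : ℤ) :
    LinearMap.ker (boundaryMatrix k (cplxFaces (simplex V) (t - 1))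
        (cplxFaces (simplex V) t)).mulVecLin
      = LinearMap.range (boundaryMatrix k (cplxFaces (simplex V) t)
        (cplxFaces (simplex V) (t + 1))).mulVecLin := by
  apply le_antisymm
  · intro x hx
    refine ⟨coneMatrix k v _ _ *ᵥ x, ?_⟩
    have hx' : _ *ᵥ x = 0 := hx
    have hcone := congrArg (· *ᵥ x) (boundaryMatrix_mul_coneMatrix_add (k := k) hv t)
    rwa [add_mulVec, ← mulVec_mulVec, ← mulVec_mulVec, hx', mulVec_zero, add_zero,
      one_mulVec] at hcone
  · rintro _ ⟨y, rfl⟩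
    change _ *ᵥ (_ *ᵥ y) = 0
    rw [mulVec_mulVec, boundaryMatrix_mul_boundaryMatrix fun _ hτ _ hi =>
      erase_mem_cplxFaces (fun _ _ _ _ => mem_univ _) rfl hτ hi, zero_mulVec]

theorem rank_boundaryMatrix_simplex_add_rank_eq_card {v : V} (hv : IsBot v) (t : ℤ) :
    (boundaryMatrix k (cplxFaces (simplex V) (t - 1)) (cplxFaces (simplex V) t)).rank
      + (boundaryMatrix k (cplxFaces (simplex V) t) (cplxFaces (simplex V) (t + 1))).rank
      = (cplxFaces (simplex V) t).card := by
  rw [Matrix.rank, Matrix.rank, ← ker_boundaryMatrix_simplex hv,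
    LinearMap.finrank_range_add_finrank_ker, Module.finrank_fintype_fun_eq_card,
    Fintype.card_coe]

theorem cplxFaces_subset_simplex (Δ : Finset (Finset V)) (j : ℤ) :
    cplxFaces Δ j ⊆ cplxFaces (simplex V) j :=
  fun _ hτ => mem_cplxFaces.2 ⟨mem_univ _, (mem_cplxFaces.1 hτ).2⟩

def simplexInclusion (Δ : Finset (Finset V)) (j : ℤ) :
    cplxFaces Δ j ↪ cplxFaces (simplex V) j :=
  Subtype.impEmbedding _ _ fun _ hτ => cplxFaces_subset_simplex Δ j hτ

theorem mem_range_simplexInclusion {Δ : Finset (Finset V)} {j : ℤ}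
    {σ : cplxFaces (simplex V) j} : σ ∈ Set.range (simplexInclusion Δ j) ↔ σ.1 ∈ Δ :=
  ⟨fun ⟨τ, hτ⟩ => hτ ▸ (mem_cplxFaces.1 τ.2).1,
    fun h => ⟨⟨σ.1, mem_cplxFaces.2 ⟨h, (mem_cplxFaces.1 σ.2).2⟩⟩, rfl⟩⟩

theorem isCompl_range_simplexInclusion (Δ : Finset (Finset V)) (j : ℤ) :
    IsCompl (Set.range (simplexInclusion Δ j)) (Set.range (simplexInclusion Δᶜ j)) := by
  have h : Set.range (simplexInclusion Δᶜ j) = (Set.range (simplexInclusion Δ j))ᶜ := by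
    ext σ
    rw [Set.mem_compl_iff, mem_range_simplexInclusion, mem_range_simplexInclusion, mem_compl]
  exact h ▸ isCompl_compl

theorem mulVecLin_boundaryMatrix_comp_extendByZero {Δ : Finset (Finset V)}
    (hΔ : IsSimplicialComplex Δ) (a b : ℤ) :
    (boundaryMatrix k (cplxFaces (simplex V) a) (cplxFaces (simplex V) b)).mulVecLin
        ∘ₗ ExtendByZero.linearMap k (simplexInclusion Δ b)
      = ExtendByZero.linearMap k (simplexInclusion Δ a)
        ∘ₗ (boundaryMatrix k (cplxFaces Δ a) (cplxFaces Δ b)).mulVecLin :=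
  LinearMap.ext <| mulVec_extend_eq_extend_submatrix_mulVec _
    (simplexInclusion _ _).injective (simplexInclusion _ _).injective
    fun _ hi j => boundaryCoeff_eq_zero_of_mem_of_notMem hΔ
      (mem_range_simplexInclusion.1 (Set.mem_range_self j)) (mt mem_range_simplexInclusion.2 hi)

theorem funLeft_comp_mulVecLin_boundaryMatrix {Δ : Finset (Finset V)}
    (hΔ : IsSimplicialComplex Δ) (a b : ℤ) :
    LinearMap.funLeft k k (simplexInclusion Δᶜ a)
        ∘ₗ (boundaryMatrix k (cplxFaces (simplex V) a) (cplxFaces (simplex V) b)).mulVecLin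
      = (boundaryMatrix k (cplxFaces Δᶜ a) (cplxFaces Δᶜ b)).mulVecLin
        ∘ₗ LinearMap.funLeft k k (simplexInclusion Δᶜ b) :=
  LinearMap.ext fun y => mulVec_comp_eq_submatrix_mulVec_comp
    (boundaryMatrix k (cplxFaces (simplex V) a) (cplxFaces (simplex V) b))
    (simplexInclusion Δᶜ a) (simplexInclusion _ _).injective
    (fun i _ hj => boundaryCoeff_eq_zero_of_mem_of_notMem hΔ
      (not_not.1 fun h => hj (mem_range_simplexInclusion.2 (mem_compl.2 h)))
      (mem_compl.1 (mem_range_simplexInclusion.1 (Set.mem_range_self i)))) y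

theorem rank_boundaryMatrix_simplex_add_rank_eq_card_add_rank_compl {Δ : Finset (Finset V)}
    (hΔ : IsSimplicialComplex Δ) {v : V} (hv : IsBot v) (t : ℤ) :
    (boundaryMatrix k (cplxFaces (simplex V) t) (cplxFaces (simplex V) (t + 1))).rank
        + (boundaryMatrix k (cplxFaces Δ (t - 1)) (cplxFaces Δ t)).rank
      = (cplxFaces Δ t).card
        + (boundaryMatrix k (cplxFaces Δᶜ t) (cplxFaces Δᶜ (t + 1))).rank := by
  set ι := ExtendByZero.linearMap k (simplexInclusion Δ t)
  set π := LinearMap.funLeft k k (simplexInclusion Δᶜ t)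
  -- Restricting the boundaries of the simplex to the non-faces gives the boundaries of the
  -- non-face complex; the kernel consists of the cycles of `Δ`, since the simplex is acyclic.
  have hmap : (LinearMap.range (boundaryMatrix k (cplxFaces (simplex V) t)
      (cplxFaces (simplex V) (t + 1))).mulVecLin).map π
      = LinearMap.range (boundaryMatrix k (cplxFaces Δᶜ t) (cplxFaces Δᶜ (t + 1))).mulVecLin := by
    rw [← LinearMap.range_comp, funLeft_comp_mulVecLin_boundaryMatrix hΔ, LinearMap.range_comp,
      LinearMap.range_eq_top.2 (LinearMap.funLeft_surjective_of_injective _ _ _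
        (simplexInclusion _ _).injective), Submodule.map_top]
  have hinf : LinearMap.range (boundaryMatrix k (cplxFaces (simplex V) t)
      (cplxFaces (simplex V) (t + 1))).mulVecLin ⊓ LinearMap.ker π
      = (LinearMap.ker
          (boundaryMatrix k (cplxFaces Δ (t - 1)) (cplxFaces Δ t)).mulVecLin).map ι := by
    rw [← ker_boundaryMatrix_simplex hv, LinearMap.ker_funLeft_eq_range_extendByZero
      (simplexInclusion _ _).injective (isCompl_range_simplexInclusion Δ t),
      LinearMap.ker_inf_range_eq_map_ker (mulVecLin_boundaryMatrix_comp_extendByZero hΔ _ _)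
        (extend_injective (simplexInclusion Δ (t - 1)).injective _)]
  have hker := LinearMap.finrank_range_add_finrank_ker
    (boundaryMatrix k (cplxFaces Δ (t - 1)) (cplxFaces Δ t)).mulVecLin
  rw [Module.finrank_fintype_fun_eq_card, Fintype.card_coe] at hker
  rw [Matrix.rank, Matrix.rank, Matrix.rank,
    Submodule.finrank_eq_finrank_map_add_finrank_inf_ker _ π, hmap, hinf,
    ← (Submodule.equivMapOfInjective ι (extend_injective (simplexInclusion Δ t).injective _)
      _).finrank_eq]
  omega

theorem faceSign_mul_faceSign_compl (τ : Finset V) (i : V) :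
    faceSign k τ i * faceSign k τᶜ i = faceSign k univ i := by
  rw [faceSign, faceSign, faceSign, ← pow_add, ← card_union_of_disjoint
    (disjoint_filter_filter disjoint_compl_right), ← filter_union, union_compl]

variable (k) in
noncomputable def rankSign (σ : Finset V) : k :=
  ∏ a ∈ σ, faceSign k univ a

theorem rankSign_mul_self (σ : Finset V) : rankSign k σ * rankSign k σ = 1 := by
  rw [rankSign, ← prod_mul_distrib]
  exact prod_eq_one fun a _ => faceSign_mul_self univ a

theorem rankSign_erase_mul {τ : Finset V} {i : V} (hi : i ∈ τ) :
    rankSign k (τ.erase i) * rankSign k τ = faceSign k univ i := by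
  rw [rankSign, rankSign, ← mul_prod_erase τ _ hi, mul_left_comm, ← rankSign, rankSign_mul_self,
    mul_one]

theorem boundaryCoeff_eq_rankSign_mul_boundaryCoeff_compl (τ' τ : Finset V) :
    boundaryCoeff k τ' τ = rankSign k τ' * boundaryCoeff k τᶜ τ'ᶜ * rankSign k τ := by
  by_cases h : ∃ i ∈ τ, τ.erase i = τ'
  · obtain ⟨i, hi, rfl⟩ := h
    have hdual := boundaryCoeff_erase (k := k) (mem_insert_self i τᶜ)
    rw [erase_insert (notMem_compl.2 hi), faceSign_insert_self] at hdual
    rw [compl_erase, hdual, boundaryCoeff_erase hi, mul_right_comm, rankSign_erase_mul hi,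
      ← faceSign_mul_faceSign_compl τ i, mul_assoc, faceSign_mul_self, mul_one]
  · push Not at h
    rw [boundaryCoeff_eq_zero h, boundaryCoeff_eq_zero, mul_zero, zero_mul]
    intro x hx he
    have hτ : τ = insert x τ' := by rw [← compl_compl τ, ← he, compl_erase, compl_compl]
    exact h x (hτ ▸ mem_insert_self x τ') (by rw [hτ, erase_insert (mem_compl.1 hx)])

theorem rank_boundaryMatrix_eq_of_compl {s t s' t' : Finset (Finset V)}
    (hs : ∀ σ, σ ∈ s ↔ σᶜ ∈ s') (ht : ∀ σ, σ ∈ t ↔ σᶜ ∈ t') :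
    (boundaryMatrix k s t).rank = (boundaryMatrix k t' s').rank := by
  have hunit (u : Finset (Finset V)) : IsUnit (diagonal fun σ : u => rankSign k σ.1).det :=
    (isUnit_iff_isUnit_det _).1 <| isUnit_diagonal.2 <| Pi.isUnit_iff.2 fun σ =>
      IsUnit.of_mul_eq_one _ (rankSign_mul_self σ.1)
  have hdual : boundaryMatrix k s t = diagonal (fun σ : s => rankSign k σ.1)
      * (boundaryMatrix k t' s')ᵀ.submatrix ((compl_involutive.toPerm _).subtypeEquiv hs)
        ((compl_involutive.toPerm _).subtypeEquiv ht)
      * diagonal (fun τ : t => rankSign k τ.1) := by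
    ext σ τ
    rw [mul_diagonal, diagonal_mul]
    exact boundaryCoeff_eq_rankSign_mul_boundaryCoeff_compl σ.1 τ.1
  rw [hdual, rank_mul_eq_left_of_isUnit_det _ _ (hunit t),
    rank_mul_eq_right_of_isUnit_det _ _ (hunit s), rank_submatrix, rank_transpose]

theorem mem_cplxFaces_alexDual_iff {Δ : Finset (Finset V)} {a c : ℤ}
    (hac : a + c + 2 = Fintype.card V) (σ : Finset V) :
    σ ∈ cplxFaces (alexDual Δ) a ↔ σᶜ ∈ cplxFaces Δᶜ c := by
  have hcard : (σᶜ.card : ℤ) = Fintype.card V - σ.card := by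
    rw [card_compl, Nat.cast_sub (card_le_univ σ)]
  simp only [mem_cplxFaces, alexDual, mem_filter, mem_univ, true_and, mem_compl, hcard]
  constructor <;> rintro ⟨hΔ, hσ⟩ <;> exact ⟨hΔ, by omega⟩

end AlexanderDuality

open AlexanderDuality in
/-- simplicial Alexander duality: for an abstract simplicial complex `Δ`
on a vertex set `V` with `|V| = n` and every integer `i`, the `i`-th reduced homology
of the Alexander dual `Δ*` with coefficients in a field `k` is isomorphic to the
`(n - 3 - i)`-th reduced cohomology of `Δ`; here stated as equality of `k`-dimensions. -/
theorem alexander_duality (k : Type*) [Field k] {V : Type*} [LinearOrder V] [Fintype V]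
    (n : ℕ) (hn : Fintype.card V = n) (hpos : 0 < n)
    (Δ : Finset (Finset V)) (h : IsSimplicialComplex Δ) (i : ℤ) :
    redHomDim k (alexDual Δ) i = redCohomDim k Δ ((n : ℤ) - 3 - i) := by
  have : Nonempty V := Fintype.card_pos_iff.1 (hn ▸ hpos)
  obtain ⟨v, hv⟩ := Finite.exists_min (id : V → V)
  set j := (n : ℤ) - 3 - i
  have hcompl (a c : ℤ) (hac : a + c + 2 = n) := mem_cplxFaces_alexDual_iff (Δ := Δ) (a := a)
    (c := c) (by omega)
  have hΔj := rank_boundaryMatrix_simplex_add_rank_eq_card_add_rank_compl (k := k) h hv j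
  have hΔj' := rank_boundaryMatrix_simplex_add_rank_eq_card_add_rank_compl (k := k) h hv (j + 1)
  have hsimplex := rank_boundaryMatrix_simplex_add_rank_eq_card (k := k) hv (j + 1)
  have hcard := card_cplxFaces_simplex Δ (j + 1)
  have hrank_dual := rank_boundaryMatrix_eq_of_compl (k := k)
    (hcompl (i - 1) (j + 1 + 1) (by omega)) (hcompl i (j + 1) (by omega))
  have hrank_dual' := rank_boundaryMatrix_eq_of_compl (k := k)
    (hcompl i (j + 1) (by omega)) (hcompl (i + 1) j (by omega))
  have hcard_dual := card_equiv (compl_involutive.toPerm _) (hcompl i (j + 1) (by omega))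
  simp only [redHomDim, redCohomDim, homDimAt, cohomDimAt, bMat_eq_boundaryMatrix,
    rank_transpose]
  rw [add_sub_cancel_right] at hΔj' hsimplex ⊢
  rw [add_sub_cancel_right]
  omega
end

section
/- Hochster's formula: for a simplicial complex Δ on {1,…,n} and σ ⊆ {1,…,n}, the ℕⁿ-graded Betti number β_{i,σ}(S/I_Δ) of the Stanley-Reisner ring over S = k[x₁,…,x_n] in squarefree degree σ equals dim_k H̃^{|σ|−i−1}(Δ|_σ; k), the dimension of reduced simplicial cohomology of the restriction of Δ to σ. -/
open Finset

/-- Membership of the squarefree monomial `x^w` in the squarefree monomial ideal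
generated by `{x^g : g ∈ G}`: some generator divides `x^w`. -/
def memSqIdeal {n : ℕ} (G : Finset (Finset (Fin n))) (w : Finset (Fin n)) : Prop :=
  ∃ g ∈ G, g ⊆ w


instance {n : ℕ} (G : Finset (Finset (Fin n))) (w : Finset (Fin n)) :
    Decidable (memSqIdeal G w) := by
  unfold memSqIdeal; infer_instance

/-- The degree-`σ̃` strand of `S/I ⊗ K_•` (`K_•` the Koszul resolution of `k`):
in homological degree `j` a basis is given by the `τ ⊆ σ` with `|τ| = j` such
that the monomial `x^(σ∖τ)` does not lie in `I = ⟨x^g : g ∈ G⟩`. -/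
def kFacesQ {n : ℕ} (G : Finset (Finset (Fin n))) (σ : Finset (Fin n)) (j : ℤ) :
    Finset (Finset (Fin n)) :=
  σ.powerset.filter fun τ => (τ.card : ℤ) = j ∧ ¬ memSqIdeal G (σ \ τ)

/-- The degree-`σ̃` strand of `I ⊗ K_•`: in homological degree `j` a basis is given
by the `τ ⊆ σ` with `|τ| = j` such that `x^(σ∖τ) ∈ I = ⟨x^g : g ∈ G⟩`. -/
def kFacesI {n : ℕ} (G : Finset (Finset (Fin n))) (σ : Finset (Fin n)) (j : ℤ) :
    Finset (Finset (Fin n)) :=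
  σ.powerset.filter fun τ => (τ.card : ℤ) = j ∧ memSqIdeal G (σ \ τ)

/-- The graded Betti number `β_{i,σ}(S/I) = dim_k Tor_i^S(S/I, k)_σ̃` of the quotient
by the squarefree monomial ideal `I = ⟨x^g : g ∈ G⟩`, computed as the `i`-th homology
of the degree-`σ̃` strand of `S/I` tensored with the Koszul resolution of `k`. -/
noncomputable def bettiQ (k : Type*) [Field k] {n : ℕ} (G : Finset (Finset (Fin n)))
    (i : ℕ) (σ : Finset (Fin n)) : ℕ :=
  homDimAt k (kFacesQ G σ) (i : ℤ)

/-- The graded Betti number `β_{i,σ}(I) = dim_k Tor_i^S(I, k)_σ̃` of the squarefree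
monomial ideal `I = ⟨x^g : g ∈ G⟩`, computed as the `i`-th homology of the
degree-`σ̃` strand of `I` tensored with the Koszul resolution of `k`. -/
noncomputable def bettiI (k : Type*) [Field k] {n : ℕ} (G : Finset (Finset (Fin n)))
    (i : ℕ) (σ : Finset (Fin n)) : ℕ :=
  homDimAt k (kFacesI G σ) (i : ℤ)

/-!
In squarefree degree `σ`, the Koszul complex `S/I_Δ ⊗ K_•` has basis the `τ ⊆ σ` with
`σ \ τ ∈ Δ`, so complementation in `σ` identifies it, with degrees reversed, with the simplicial
cochain complex of `Δ|_σ`. Under this identification the Koszul differential is the transposed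
simplicial boundary conjugated by the diagonal sign `τ ↦ (-1) ^ ∑_{a ∈ τ} #{b ∈ σ | b < a}`:
the signs `(-1) ^ #{a ∈ τ | a < i}` of deleting `i` from `τ` and `(-1) ^ #{a ∈ σ \ τ | a < i}` of
adding it to `σ \ τ` multiply to `(-1) ^ #{b ∈ σ | b < i}`, which the diagonal sign absorbs.
Hence all ranks, and so all (co)homology dimensions, agree.
-/

open Matrix

theorem neg_one_pow_mul_self {R : Type*} [Monoid R] [HasDistribNeg R] (m : ℕ) :
    (-1 : R) ^ m * (-1) ^ m = 1 := by
  rw [← pow_add, ← two_mul, pow_mul, neg_one_sq, one_pow]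

section FinsetComplement

variable {α : Type*} [DecidableEq α]

theorem card_filter_eq_add_card_filter_sdiff {σ τ : Finset α} (hτ : τ ⊆ σ) (p : α → Prop)
    [DecidablePred p] : (σ.filter p).card = (τ.filter p).card + ((σ \ τ).filter p).card := by
  rw [← card_union_of_disjoint (disjoint_filter_filter disjoint_sdiff), ← filter_union,
    union_sdiff_of_subset hτ]

theorem sdiff_eq_insert_sdiff_insert {σ τ : Finset α} {i : α} (hτ : insert i τ ⊆ σ) (hi : i ∉ τ) :
    i ∉ σ \ insert i τ ∧ σ \ τ = insert i (σ \ insert i τ) := by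
  refine ⟨fun h => (mem_sdiff.1 h).2 (mem_insert_self i τ), ?_⟩
  rw [sdiff_insert, insert_erase (mem_sdiff.2 ⟨hτ (mem_insert_self i τ), hi⟩)]

end FinsetComplement

section Boundary

variable (k : Type*) [Ring k] {V : Type*} [LinearOrder V]

noncomputable def boundaryCoeff (τ' τ : Finset V) : k :=
  ∑ i ∈ τ, if τ.erase i = τ' then (-1 : k) ^ (τ.filter fun a => a < i).card else 0

noncomputable def faceSign (σ τ : Finset V) : k :=
  (-1 : k) ^ ∑ a ∈ τ, (σ.filter fun b => b < a).card

theorem bMat_apply {k : Type*} [Field k] [Fintype V] (F : ℤ → Finset (Finset V)) (j : ℤ)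
    (τ' : F (j - 1)) (τ : F j) : bMat k F j τ' τ = boundaryCoeff k τ'.1 τ.1 :=
  rfl

variable {k}

theorem boundaryCoeff_insert {τ : Finset V} {i : V} (hi : i ∉ τ) :
    boundaryCoeff k τ (insert i τ) = (-1 : k) ^ (τ.filter fun a => a < i).card := by
  rw [boundaryCoeff, Finset.sum_eq_single_of_mem i (mem_insert_self i τ), if_pos (erase_insert hi),
    filter_insert, if_neg (lt_irrefl i)]
  intro b hb hbi
  refine if_neg fun hb' => hi ?_
  rw [← hb']
  exact mem_erase.2 ⟨Ne.symm hbi, mem_insert_self i τ⟩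

theorem boundaryCoeff_eq_zero {τ' τ : Finset V} (h : ∀ i ∉ τ', τ ≠ insert i τ') :
    boundaryCoeff k τ' τ = 0 := by
  refine sum_eq_zero fun i hi => if_neg fun he => h i ?_ ?_
  · rw [← he]; exact notMem_erase i τ
  · rw [← he, insert_erase hi]

theorem faceSign_insert {σ τ : Finset V} {i : V} (hi : i ∉ τ) :
    faceSign k σ (insert i τ) = (-1 : k) ^ (σ.filter fun b => b < i).card * faceSign k σ τ := by
  rw [faceSign, faceSign, sum_insert hi, pow_add]

theorem faceSign_mul_self (σ τ : Finset V) : faceSign k σ τ * faceSign k σ τ = 1 :=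
  neg_one_pow_mul_self _

theorem isUnit_faceSign (σ τ : Finset V) : IsUnit (faceSign k σ τ) :=
  isUnit_neg_one.pow _

theorem boundaryCoeff_eq_faceSign_mul {k : Type*} [CommRing k] {σ τ' τ : Finset V}
    (hτ' : τ' ⊆ σ) (hτ : τ ⊆ σ) :
    boundaryCoeff k τ' τ = faceSign k σ τ' * boundaryCoeff k (σ \ τ) (σ \ τ') * faceSign k σ τ := by
  by_cases hface : ∃ i ∉ τ', τ = insert i τ'
  · obtain ⟨i, hi, rfl⟩ := hface
    obtain ⟨hi', hsd⟩ := sdiff_eq_insert_sdiff_insert hτ hi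
    rw [hsd, boundaryCoeff_insert hi, boundaryCoeff_insert hi', faceSign_insert hi,
      card_filter_eq_add_card_filter_sdiff hτ, filter_insert, if_neg (lt_irrefl i), pow_add]
    set x : k := (-1) ^ (τ'.filter fun a => a < i).card
    set s := faceSign k σ τ'
    linear_combination (-x) * faceSign_mul_self (k := k) σ τ' +
      (-x * s * s) * neg_one_pow_mul_self (R := k) ((σ \ insert i τ').filter fun a => a < i).card
  · have hdual : ∀ i ∉ σ \ τ, σ \ τ' ≠ insert i (σ \ τ) := by
      intro i hi heq
      obtain ⟨hi', hsd⟩ := sdiff_eq_insert_sdiff_insert (heq ▸ sdiff_subset) hi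
      simp only [← heq, Finset.sdiff_sdiff_eq_self hτ', Finset.sdiff_sdiff_eq_self hτ] at hsd hi'
      exact hface ⟨i, hi', hsd⟩
    rw [boundaryCoeff_eq_zero fun i hi h => hface ⟨i, hi, h⟩, boundaryCoeff_eq_zero hdual,
      mul_zero, zero_mul]

end Boundary

section ComplFamily

variable {k : Type*} [Field k] {V : Type*} [LinearOrder V]
  {σ : Finset V} {G : ℤ → Finset (Finset V)} {c : ℤ}

def complFamily (σ : Finset V) (G : ℤ → Finset (Finset V)) (c j : ℤ) : Finset (Finset V) :=
  σ.powerset.filter fun τ => σ \ τ ∈ G (c - j)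

theorem mem_complFamily {j : ℤ} {τ : Finset V} :
    τ ∈ complFamily σ G c j ↔ τ ⊆ σ ∧ σ \ τ ∈ G (c - j) := by
  rw [complFamily, mem_filter, mem_powerset]

variable (hG : ∀ m, ∀ ρ ∈ G m, ρ ⊆ σ)
include hG

def complFamilyEquiv {j m : ℤ} (hm : c - j = m) : complFamily σ G c j ≃ G m where
  toFun τ := ⟨σ \ τ.1, hm ▸ (mem_complFamily.1 τ.2).2⟩
  invFun ρ := ⟨σ \ ρ.1, mem_complFamily.2
    ⟨sdiff_subset, by rw [Finset.sdiff_sdiff_eq_self (hG m ρ.1 ρ.2), hm]; exact ρ.2⟩⟩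
  left_inv τ := Subtype.ext (Finset.sdiff_sdiff_eq_self (mem_complFamily.1 τ.2).1)
  right_inv ρ := Subtype.ext (Finset.sdiff_sdiff_eq_self (hG m ρ.1 ρ.2))

theorem card_complFamily {j m : ℤ} (hm : c - j = m) :
    (complFamily σ G c j).card = (G m).card := by
  rw [← Fintype.card_coe, ← Fintype.card_coe]
  exact Fintype.card_congr (complFamilyEquiv hG hm)

theorem bMat_complFamily [Fintype V] {j m : ℤ} (hm : c + 1 - j = m) :
    bMat k (complFamily σ G c) j =
      diagonal (fun τ' : ↥(complFamily σ G c (j - 1)) => faceSign k σ τ'.1) *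
        ((bMat k G m)ᵀ.submatrix (complFamilyEquiv hG (j := j - 1) (m := m) (by omega))
          (complFamilyEquiv hG (j := j) (m := m - 1) (by omega)) :
          Matrix (complFamily σ G c (j - 1)) (complFamily σ G c j) k) *
        diagonal (fun τ : ↥(complFamily σ G c j) => faceSign k σ τ.1) := by
  ext τ' τ
  simp only [mul_diagonal, diagonal_mul, submatrix_apply, transpose_apply, bMat_apply]
  exact boundaryCoeff_eq_faceSign_mul (mem_complFamily.1 τ'.2).1 (mem_complFamily.1 τ.2).1

theorem rank_bMat_complFamily [Fintype V] {j m : ℤ} (hm : c + 1 - j = m) :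
    (bMat k (complFamily σ G c) j).rank = (bMat k G m).rank := by
  have hD : ∀ i : ℤ, IsUnit (diagonal fun τ : ↥(complFamily σ G c i) => faceSign k σ τ.1).det :=
    fun _ => (isUnit_iff_isUnit_det _).1 (isUnit_diagonal.2 (Pi.isUnit_iff.2 fun _ =>
      isUnit_faceSign _ _))
  rw [bMat_complFamily hG hm, rank_mul_eq_left_of_isUnit_det _ _ (hD j),
    rank_mul_eq_right_of_isUnit_det _ _ (hD (j - 1)), rank_submatrix, rank_transpose]

theorem homDimAt_complFamily [Fintype V] (j : ℤ) :
    homDimAt k (complFamily σ G c) j = cohomDimAt k G (c - j) := by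
  rw [homDimAt, cohomDimAt, rank_transpose, rank_transpose, card_complFamily hG rfl,
    rank_bMat_complFamily hG (j := j) (m := c - j + 1) (by ring),
    rank_bMat_complFamily hG (j := j + 1) (m := c - j) (by ring)]

end ComplFamily

section StanleyReisner

variable {n : ℕ} {Δ : Finset (Finset (Fin n))}

theorem memSqIdeal_nonfaces_iff (h : IsSimplicialComplex Δ) (w : Finset (Fin n)) :
    memSqIdeal (univ.filter fun τ => τ ∉ Δ) w ↔ w ∉ Δ := by
  refine ⟨fun ⟨g, hg, hgw⟩ hw => (mem_filter.1 hg).2 (h w hw g hgw), fun hw => ⟨w, ?_, subset_rfl⟩⟩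
  simpa using hw

theorem kFacesQ_nonfaces (h : IsSimplicialComplex Δ) (σ : Finset (Fin n)) :
    kFacesQ (univ.filter fun τ => τ ∉ Δ) σ =
      complFamily σ (cplxFaces (restrict Δ σ)) (σ.card - 1) := by
  ext j τ
  simp only [kFacesQ, complFamily, cplxFaces, _root_.restrict, mem_filter, mem_powerset,
    memSqIdeal_nonfaces_iff h, not_not, sdiff_subset, and_true]
  refine and_congr_right fun hτ => ?_
  rw [and_comm, card_sdiff_of_subset hτ, Nat.cast_sub (card_le_card hτ)]
  exact and_congr_right fun _ => by omega

theorem subset_of_mem_cplxFaces_restrict {σ ρ : Finset (Fin n)} {m : ℤ}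
    (hρ : ρ ∈ cplxFaces (restrict Δ σ) m) : ρ ⊆ σ :=
  (mem_filter.1 (mem_filter.1 hρ).1).2

end StanleyReisner

/-- Hochster's formula: for a simplicial complex `Δ` on `{1,…,n}` and
`σ ⊆ {1,…,n}`, the graded Betti number `β_{i,σ}(S/I_Δ)` of the Stanley-Reisner ring
(here `I_Δ = ⟨x^τ : τ ∉ Δ⟩`) in squarefree degree `σ` equals
`dim_k H̃^{|σ|-i-1}(Δ|_σ; k)`. -/
theorem hochster_formula (k : Type*) [Field k] {n : ℕ}
    (Δ : Finset (Finset (Fin n))) (h : IsSimplicialComplex Δ)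
    (σ : Finset (Fin n)) (i : ℕ) :
    bettiQ k (Finset.univ.filter fun τ : Finset (Fin n) => τ ∉ Δ) i σ
      = redCohomDim k (restrict Δ σ) ((σ.card : ℤ) - i - 1) := by
  rw [bettiQ, kFacesQ_nonfaces h,
    homDimAt_complFamily (fun _ _ => subset_of_mem_cplxFaces_restrict), redCohomDim,
    sub_right_comm]
end
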